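/- Let 𝒜 = ⟨A,R⟩ be an almost bounded structure and u ∈ Uf(A). For n ∈ ℕ let V_n = {w ∈ A : ⟨u⟩^n_{S^ue} ≅_P ⟨w⟩^n_S} and λ_n = |V_n|. If λ_n ≥ ℵ0 for every n ∈ ℕ, then the cardinality of {v ∈ Uf(A) : ⟨u⟩^ω_{S^ue} ≅_P ⟨v⟩^ω_{S^ue}} equals 2^{2^{λ_m}}, where λ_m = min{λ_n : n ∈ ℕ}. -/

import Mathlib

open FirstOrder Cardinal

namespace UEx

/-- Elements of infinite in- or out-degree. -/
def RInf (R : A → A → Prop) : Set A :=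
  {w | {v | R w v}.Infinite ∨ {v | R v w}.Infinite}

/-- A uniform finite bound on all in- and out-degrees. -/
def Bounded (R : A → A → Prop) : Prop :=
  ∃ n : ℕ, ∀ w : A, {v | R w v}.Finite ∧ {v | R v w}.Finite ∧
    {v | R w v}.ncard ≤ n ∧ {v | R v w}.ncard ≤ n

/-- Almost bounded: finitely many elements of infinite degree, and a uniform
finite bound on the degrees of the remaining elements. -/
def AlmostBounded (R : A → A → Prop) : Prop :=
  (RInf R).Finite ∧ ∃ n : ℕ, ∀ w ∉ RInf R,
    {v | R w v}.ncard ≤ n ∧ {v | R v w}.ncard ≤ n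

/-- P = {(s,t) ∈ R : s ∈ R∞ or t ∈ R∞}. -/
def PRel (R : A → A → Prop) (s t : A) : Prop := R s t ∧ (s ∈ RInf R ∨ t ∈ RInf R)

/-- S = R \ P. -/
def SRel (R : A → A → Prop) (s t : A) : Prop := R s t ∧ ¬(s ∈ RInf R ∨ t ∈ RInf R)

/-- The ultrafilter extension of a binary relation. -/
def ueRel (Q : A → A → Prop) (u v : Ultrafilter A) : Prop :=
  ∀ X ∈ v, {w | ∃ s ∈ X, Q w s} ∈ u

/-- The set of elements reachable from `w` in at most `n` steps along `Q ∪ Q⁻¹`. -/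
def nbhd (Q : B → B → Prop) (w : B) : ℕ → Set B
  | 0 => {w}
  | n + 1 => nbhd Q w n ∪ {v | ∃ x ∈ nbhd Q w n, Q x v ∨ Q v x}

/-- The ω-neighborhood of `w` along `Q ∪ Q⁻¹`. -/
def onbhd (Q : B → B → Prop) (w : B) : Set B := ⋃ n, nbhd Q w n

/-- A `P`-isomorphism between the substructure of `B` on `sB` (with relation `SB`,
base point `b`) and the substructure of `C` on `sC` (with relation `SC`, base point `c`),
compatible with the `P`-connections to the elements of `Rinf`. -/
def IsPIsoOn {A B C : Type*} (Rinf : Set A)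
    (SB : B → B → Prop) (PBr : B → A → Prop) (PBl : A → B → Prop)
    (SC : C → C → Prop) (PCr : C → A → Prop) (PCl : A → C → Prop)
    (sB : Set B) (sC : Set C) (b : B) (c : C) : Prop :=
  ∃ f : sB ≃ sC,
    (∀ (hb : b ∈ sB) (hc : c ∈ sC), f ⟨b, hb⟩ = ⟨c, hc⟩) ∧
    (∀ x y : sB, SB x y ↔ SC (f x) (f y)) ∧
    (∀ x : sB, ∀ t ∈ Rinf, (PBr x t ↔ PCr (f x) t) ∧ (PBl t x ↔ PCl t (f x)))

/-- `P`-isomorphism of neighborhoods, both taken inside the ultrafilter extension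
(elements `t` of `R_∞` are identified with the principal ultrafilters `π_t`). -/
def PIsoUeUe {A : Type*} (R : A → A → Prop)
    (sB sC : Set (Ultrafilter A)) (b c : Ultrafilter A) : Prop :=
  IsPIsoOn (RInf R)
    (ueRel (SRel R)) (fun x t => ueRel (PRel R) x (pure t)) (fun t x => ueRel (PRel R) (pure t) x)
    (ueRel (SRel R)) (fun x t => ueRel (PRel R) x (pure t)) (fun t x => ueRel (PRel R) (pure t) x)
    sB sC b c

/-- `P`-isomorphism of a neighborhood in the ultrafilter extension with
a neighborhood in the original structure. -/
def PIsoUeA {A : Type*} (R : A → A → Prop)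
    (sB : Set (Ultrafilter A)) (sC : Set A) (b : Ultrafilter A) (c : A) : Prop :=
  IsPIsoOn (RInf R)
    (ueRel (SRel R)) (fun x t => ueRel (PRel R) x (pure t)) (fun t x => ueRel (PRel R) (pure t) x)
    (SRel R) (fun x t => PRel R x t) (fun t x => PRel R t x)
    sB sC b c

section
open Cardinal Set


variable {A B C : Type*}

/-! ### ueRel and pure -/

lemma ueRel_pure_right {Q : A → A → Prop} {x : Ultrafilter A} {r : A} :
    ueRel Q x (pure r) ↔ {b | Q b r} ∈ x := by
  constructor
  · intro h
    have := h {r} (by simp)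
    simpa using this
  · intro h X hX
    have hr : r ∈ X := hX
    exact Filter.mem_of_superset h (fun b hb => ⟨r, hr, hb⟩)

lemma ueRel_pure_left {Q : A → A → Prop} {x : Ultrafilter A} {r : A} :
    ueRel Q (pure r) x ↔ {s | Q r s} ∈ x := by
  constructor
  · intro h
    by_contra hc
    have hcompl : {s | Q r s}ᶜ ∈ x := (Ultrafilter.compl_mem_iff_notMem).2 hc
    have := h _ hcompl
    simp only [Ultrafilter.mem_pure] at this
    obtain ⟨s, hs, hQ⟩ := this
    exact hs hQ
  · intro h X hX
    simp only [Ultrafilter.mem_pure]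
    obtain ⟨s, hs⟩ := Ultrafilter.nonempty_of_mem (x.inter_mem h hX)
    exact ⟨s, hs.2, hs.1⟩

lemma ueRel_pure_pure {Q : A → A → Prop} {a b : A} :
    ueRel Q (pure a) (pure b) ↔ Q a b := by
  rw [ueRel_pure_right]; simp

/-- pointwise edges on an ultrafilter-large set give a `ueRel` edge between the maps -/
lemma ueRel_map {Q : A → A → Prop} (v : Ultrafilter A) {Y : Set A} (hY : Y ∈ v)
    {g g' : A → A} (hedge : ∀ w ∈ Y, Q (g w) (g' w)) :
    ueRel Q (Ultrafilter.map g v) (Ultrafilter.map g' v) := by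
  intro X hX
  rw [Ultrafilter.mem_map] at hX ⊢
  refine Filter.mem_of_superset (v.inter_mem hY hX) ?_
  rintro w ⟨hw, hw'⟩
  exact ⟨g' w, hw', hedge w hw⟩

/-! ### S basic facts -/

lemma SRel.not_left {R : A → A → Prop} {a b : A} (h : SRel R a b) : a ∉ RInf R :=
  fun ha => h.2 (Or.inl ha)

lemma SRel.not_right {R : A → A → Prop} {a b : A} (h : SRel R a b) : b ∉ RInf R :=
  fun hb => h.2 (Or.inr hb)

lemma sSucc_finite (R : A → A → Prop) (w : A) : {v | SRel R w v}.Finite := by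
  by_cases hw : w ∈ RInf R
  · convert Set.finite_empty
    ext v; simp only [mem_setOf_eq, mem_empty_iff_false, iff_false]
    exact fun hs => hs.not_left hw
  · rcases not_or.1 hw with ⟨h1, _⟩
    exact (Set.not_infinite.1 h1).subset (fun v hv => hv.1)

lemma sPred_finite (R : A → A → Prop) (w : A) : {v | SRel R v w}.Finite := by
  by_cases hw : w ∈ RInf R
  · convert Set.finite_empty
    ext v; simp only [mem_setOf_eq, mem_empty_iff_false, iff_false]
    exact fun hs => hs.not_right hw
  · rcases not_or.1 hw with ⟨_, h2⟩
    exact (Set.not_infinite.1 h2).subset (fun v hv => hv.1)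

lemma sSucc_ncard_le {R : A → A → Prop} (h : AlmostBounded R) :
    ∃ k : ℕ, ∀ w : A, {v | SRel R w v}.ncard ≤ k ∧ {v | SRel R v w}.ncard ≤ k := by
  obtain ⟨-, k, hk⟩ := h
  refine ⟨k, fun w => ⟨?_, ?_⟩⟩
  · by_cases hw : w ∈ RInf R
    · have : {v | SRel R w v} = ∅ := by
        ext v; simp only [mem_setOf_eq, mem_empty_iff_false, iff_false]
        exact fun hs => hs.not_left hw
      simp [this]
    · refine le_trans (Set.ncard_le_ncard (fun v hv => hv.1) ?_) (hk w hw).1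
      rcases not_or.1 hw with ⟨h1, _⟩
      exact Set.not_infinite.1 h1
  · by_cases hw : w ∈ RInf R
    · have : {v | SRel R v w} = ∅ := by
        ext v; simp only [mem_setOf_eq, mem_empty_iff_false, iff_false]
        exact fun hs => hs.not_right hw
      simp [this]
    · refine le_trans (Set.ncard_le_ncard (fun v hv => hv.1) ?_) (hk w hw).2
      rcases not_or.1 hw with ⟨_, h2⟩
      exact Set.not_infinite.1 h2

/-! ### nbhd basic facts -/

lemma base_mem_nbhd (Q : B → B → Prop) (w : B) (n : ℕ) : w ∈ nbhd Q w n := by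
  induction n with
  | zero => exact rfl
  | succ n ih => exact Or.inl ih

lemma nbhd_succ_subset (Q : B → B → Prop) (w : B) (n : ℕ) :
    nbhd Q w n ⊆ nbhd Q w (n + 1) := fun _ h => Or.inl h

lemma nbhd_mono (Q : B → B → Prop) (w : B) {m n : ℕ} (h : m ≤ n) :
    nbhd Q w m ⊆ nbhd Q w n := by
  induction h with
  | refl => exact le_refl _
  | step _ ih => exact fun x hx => Or.inl (ih hx)

lemma mem_nbhd_succ_of_edge {Q : B → B → Prop} {w x y : B} {n : ℕ}
    (hx : x ∈ nbhd Q w n) (hxy : Q x y ∨ Q y x) : y ∈ nbhd Q w (n + 1) :=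
  Or.inr ⟨x, hx, hxy⟩

lemma nbhd_subset_onbhd (Q : B → B → Prop) (w : B) (n : ℕ) :
    nbhd Q w n ⊆ onbhd Q w := fun x hx => Set.mem_iUnion.2 ⟨n, hx⟩

lemma base_mem_onbhd (Q : B → B → Prop) (w : B) : w ∈ onbhd Q w :=
  nbhd_subset_onbhd Q w 0 (base_mem_nbhd Q w 0)

/-- `nbhd` is finite for locally finite relations. -/
lemma nbhd_finite {Q : B → B → Prop}
    (hfin : ∀ x : B, {y | Q x y}.Finite ∧ {y | Q y x}.Finite) (w : B) (n : ℕ) :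
    (nbhd Q w n).Finite := by
  induction n with
  | zero => exact Set.finite_singleton w
  | succ n ih =>
    refine ih.union ?_
    have : {v | ∃ x ∈ nbhd Q w n, Q x v ∨ Q v x} ⊆
        ⋃ x ∈ nbhd Q w n, ({y | Q x y} ∪ {y | Q y x}) := by
      rintro v ⟨x, hx, hv⟩
      exact Set.mem_biUnion hx (by rcases hv with h | h; exacts [Or.inl h, Or.inr h])
    exact Set.Finite.subset (Set.Finite.biUnion ih (fun x _ => ((hfin x).1.union (hfin x).2))) this

lemma nbhd_sRel_finite (R : A → A → Prop) (w : A) (n : ℕ) : (nbhd (SRel R) w n).Finite :=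
  nbhd_finite (fun x => ⟨sSucc_finite R x, sPred_finite R x⟩) w n

/-- uniform bound on the size of `nbhd (SRel R) w n`. -/
lemma nbhd_sRel_ncard_le {R : A → A → Prop} (h : AlmostBounded R) (n : ℕ) :
    ∃ N : ℕ, ∀ w : A, (nbhd (SRel R) w n).ncard ≤ N := by
  obtain ⟨k, hk⟩ := sSucc_ncard_le h
  induction n with
  | zero => exact ⟨1, fun w => by simp [nbhd]⟩
  | succ n ih =>
    obtain ⟨N, hN⟩ := ih
    refine ⟨N + N * (k + k), fun w => ?_⟩
    have hfin := nbhd_sRel_finite R w n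
    refine le_trans (Set.ncard_union_le _ _ ) (add_le_add (hN w) ?_)
    have hsub : {v | ∃ x ∈ nbhd (SRel R) w n, SRel R x v ∨ SRel R v x} ⊆
        ⋃ x ∈ nbhd (SRel R) w n, ({y | SRel R x y} ∪ {y | SRel R y x}) := by
      rintro v ⟨x, hx, hv⟩
      exact Set.mem_biUnion hx (by rcases hv with h' | h'; exacts [Or.inl h', Or.inr h'])
    have hfinU : (⋃ x ∈ nbhd (SRel R) w n, ({y | SRel R x y} ∪ {y | SRel R y x})).Finite :=
      Set.Finite.biUnion hfin (fun x _ => (sSucc_finite R x).union (sPred_finite R x))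
    classical
    set F := hfin.toFinset with hF
    set U := F.biUnion (fun x => ((sSucc_finite R x).union (sPred_finite R x)).toFinset) with hU
    have hsub2 : (⋃ x ∈ nbhd (SRel R) w n, ({y | SRel R x y} ∪ {y | SRel R y x})) ⊆ (U : Set A) := by
      intro v hv
      simp only [Set.mem_iUnion] at hv
      obtain ⟨x, hx, hv⟩ := hv
      simp only [hU, Finset.coe_biUnion, Set.mem_iUnion]
      refine ⟨x, by simpa [hF] using hx, ?_⟩
      simpa using hv
    refine le_trans (Set.ncard_le_ncard (hsub.trans hsub2) (U.finite_toSet)) ?_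
    rw [Set.ncard_coe_finset]
    calc U.card ≤ ∑ x ∈ F, (((sSucc_finite R x).union (sPred_finite R x)).toFinset).card :=
          Finset.card_biUnion_le
      _ ≤ ∑ _x ∈ F, (k + k) := by
          refine Finset.sum_le_sum (fun x _ => ?_)
          rw [← Set.ncard_eq_toFinset_card _ ((sSucc_finite R x).union (sPred_finite R x))]
          exact le_trans (Set.ncard_union_le _ _) (add_le_add (hk x).1 (hk x).2)
      _ = F.card * (k + k) := by rw [Finset.sum_const, smul_eq_mul]
      _ ≤ N * (k + k) := by
          have : F.card = (nbhd (SRel R) w n).ncard := (Set.ncard_eq_toFinset_card _ hfin).symm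
          rw [this]
          exact Nat.mul_le_mul_right _ (hN w)
end

section
open Set


variable {A B C D : Type*} {Rinf : Set A}
variable {SB : B → B → Prop} {PBr : B → A → Prop} {PBl : A → B → Prop}
variable {SC : C → C → Prop} {PCr : C → A → Prop} {PCl : A → C → Prop}
variable {SD : D → D → Prop} {PDr : D → A → Prop} {PDl : A → D → Prop}

lemma IsPIsoOn.refl (sB : Set B) (b : B) :
    IsPIsoOn Rinf SB PBr PBl SB PBr PBl sB sB b b :=
  ⟨Equiv.refl _, fun _ _ => rfl, fun _ _ => Iff.rfl, fun _ _ _ => ⟨Iff.rfl, Iff.rfl⟩⟩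

lemma IsPIsoOn.symm {sB : Set B} {sC : Set C} {b : B} {c : C}
    (h : IsPIsoOn Rinf SB PBr PBl SC PCr PCl sB sC b c) :
    IsPIsoOn Rinf SC PCr PCl SB PBr PBl sC sB c b := by
  obtain ⟨f, hbase, hS, hP⟩ := h
  refine ⟨f.symm, ?_, ?_, ?_⟩
  · intro hc hb
    rw [Equiv.symm_apply_eq, hbase hb hc]
  · intro x y
    have := hS (f.symm x) (f.symm y)
    rwa [f.apply_symm_apply, f.apply_symm_apply, iff_comm] at this
  · intro x t ht
    have := hP (f.symm x) t ht
    rwa [f.apply_symm_apply, iff_comm (a := PBr _ t), iff_comm (a := PBl t _)] at this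

lemma IsPIsoOn.trans {sB : Set B} {sC : Set C} {sD : Set D} {b : B} {c : C} {d : D}
    (hc : c ∈ sC)
    (h1 : IsPIsoOn Rinf SB PBr PBl SC PCr PCl sB sC b c)
    (h2 : IsPIsoOn Rinf SC PCr PCl SD PDr PDl sC sD c d) :
    IsPIsoOn Rinf SB PBr PBl SD PDr PDl sB sD b d := by
  obtain ⟨f, hbf, hSf, hPf⟩ := h1
  obtain ⟨g, hbg, hSg, hPg⟩ := h2
  refine ⟨f.trans g, ?_, ?_, ?_⟩
  · intro hb hd
    simp only [Equiv.trans_apply]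
    rw [hbf hb hc, hbg hc hd]
  · intro x y
    exact (hSf x y).trans (hSg (f x) (f y))
  · intro x t ht
    exact ⟨((hPf x t ht).1).trans ((hPg (f x) t ht).1), ((hPf x t ht).2).trans ((hPg (f x) t ht).2)⟩

/-- Level-preservation: a pointed `S`-isomorphism between supersets of the `n`-neighborhoods
preserves membership in the `m`-neighborhoods for `m ≤ n`. -/
lemma level_iff {sB : Set B} {sC : Set C} {b : B} {c : C}
    (f : sB ≃ sC)
    (hbase : ∀ (hb : b ∈ sB) (hc : c ∈ sC), f ⟨b, hb⟩ = ⟨c, hc⟩)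
    (hS : ∀ x y : sB, SB x y ↔ SC (f x) (f y))
    {n : ℕ} (hnB : nbhd SB b n ⊆ sB) (hnC : nbhd SC c n ⊆ sC) :
    ∀ m ≤ n, ∀ x : sB, (x : B) ∈ nbhd SB b m ↔ (f x : C) ∈ nbhd SC c m := by
  have hb : b ∈ sB := hnB (base_mem_nbhd _ _ _)
  have hc : c ∈ sC := hnC (base_mem_nbhd _ _ _)
  intro m
  induction m with
  | zero =>
    intro _ x
    constructor
    · intro hx
      have hx' : x = ⟨b, hb⟩ := Subtype.ext hx
      rw [hx', hbase hb hc]; exact rfl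
    · intro hx
      have hx' : f x = ⟨c, hc⟩ := Subtype.ext hx
      have : x = ⟨b, hb⟩ := by
        apply f.injective
        rw [hx', hbase hb hc]
      rw [this]; exact rfl
  | succ m ih =>
    intro hm x
    have hm' : m ≤ n := Nat.le_of_succ_le hm
    constructor
    · rintro (hx | ⟨y, hy, hedge⟩)
      · exact nbhd_succ_subset _ _ _ ((ih hm' x).1 hx)
      · have hy' : y ∈ sB := hnB (nbhd_mono _ _ hm' hy)
        have hfy : (f ⟨y, hy'⟩ : C) ∈ nbhd SC c m := (ih hm' ⟨y, hy'⟩).1 hy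
        refine mem_nbhd_succ_of_edge hfy ?_
        rcases hedge with he | he
        · exact Or.inl ((hS ⟨y, hy'⟩ x).1 he)
        · exact Or.inr ((hS x ⟨y, hy'⟩).1 he)
    · rintro (hx | ⟨y, hy, hedge⟩)
      · exact nbhd_succ_subset _ _ _ ((ih hm' x).2 hx)
      · have hy' : y ∈ sC := hnC (nbhd_mono _ _ hm' hy)
        have hyB : (f.symm ⟨y, hy'⟩ : B) ∈ nbhd SB b m := by
          have := (ih hm' (f.symm ⟨y, hy'⟩)).2
          rw [f.apply_symm_apply] at this
          exact this hy
        refine mem_nbhd_succ_of_edge hyB ?_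
        rcases hedge with he | he
        · refine Or.inl ((hS (f.symm ⟨y, hy'⟩) x).2 ?_)
          rwa [f.apply_symm_apply]
        · refine Or.inr ((hS x (f.symm ⟨y, hy'⟩)).2 ?_)
          rwa [f.apply_symm_apply]

/-- Restriction of a pointed `P`-isomorphism to smaller neighborhoods. -/
lemma IsPIsoOn.restrict {sB : Set B} {sC : Set C} {b : B} {c : C}
    (h : IsPIsoOn Rinf SB PBr PBl SC PCr PCl sB sC b c)
    {n : ℕ} (hnB : nbhd SB b n ⊆ sB) (hnC : nbhd SC c n ⊆ sC) {m : ℕ} (hm : m ≤ n) :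
    IsPIsoOn Rinf SB PBr PBl SC PCr PCl (nbhd SB b m) (nbhd SC c m) b c := by
  classical
  obtain ⟨f, hbase, hS, hP⟩ := h
  have key := level_iff f hbase hS hnB hnC m hm
  have hsubB : nbhd SB b m ⊆ sB := fun x hx => hnB (nbhd_mono _ _ hm hx)
  have hsubC : nbhd SC c m ⊆ sC := fun x hx => hnC (nbhd_mono _ _ hm hx)
  refine ⟨⟨fun x => ⟨f ⟨x, hsubB x.2⟩, (key ⟨x, hsubB x.2⟩).1 x.2⟩,
          fun y => ⟨f.symm ⟨y, hsubC y.2⟩, ?_⟩, ?_, ?_⟩, ?_, ?_, ?_⟩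
  · have := (key (f.symm ⟨y, hsubC y.2⟩)).2
    rw [f.apply_symm_apply] at this
    exact this y.2
  · intro x
    apply Subtype.ext
    simp [Subtype.coe_eta]
  · intro y
    apply Subtype.ext
    simp [Subtype.coe_eta]
  · intro hb hc
    apply Subtype.ext
    show (f ⟨b, hsubB hb⟩ : C) = c
    rw [hbase (hsubB hb) (hsubC hc)]
  · intro x y
    exact hS ⟨x, hsubB x.2⟩ ⟨y, hsubB y.2⟩
  · intro x t ht
    exact hP ⟨x, hsubB x.2⟩ t ht
end

section
open Set


variable {A B : Type*}

lemma nbhd_trans {Q : B → B → Prop} {x y : B} {m : ℕ} {k : ℕ} :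
    ∀ {a : B}, a ∈ nbhd Q y k → y ∈ nbhd Q x m → a ∈ nbhd Q x (m + k) := by
  induction k with
  | zero => intro a ha hy; cases ha; exact hy
  | succ k ih =>
    rintro a (ha | ⟨z, hz, hedge⟩) hy
    · exact nbhd_mono _ _ (Nat.le_succ _) (ih ha hy)
    · exact mem_nbhd_succ_of_edge (ih hz hy) hedge

lemma mem_nbhd_symm {Q : B → B → Prop} {w : B} {n : ℕ} :
    ∀ {x : B}, x ∈ nbhd Q w n → w ∈ nbhd Q x n := by
  induction n with
  | zero => intro x hx; cases hx; exact rfl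
  | succ n ih =>
    rintro x (hx | ⟨y, hy, hedge⟩)
    · exact nbhd_mono _ _ (Nat.le_succ _) (ih hx)
    · have h1 : y ∈ nbhd Q x 1 :=
        mem_nbhd_succ_of_edge (base_mem_nbhd Q x 0) (by tauto)
      have := nbhd_trans (ih hy) h1
      rwa [Nat.add_comm] at this

/-- Greedy coloring of a symmetric graph with degrees bounded by `d`. -/
lemma exists_coloring (E : B → B → Prop) (hsym : ∀ x y, E x y → E y x) (d : ℕ)
    (hdeg : ∀ x, {y | E x y}.Finite ∧ {y | E x y}.ncard ≤ d) :
    ∃ c : B → ℕ, (∀ x, c x ≤ d) ∧ ∀ x y, E x y → x ≠ y → c x ≠ c y := by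
  classical
  letI r : B → B → Prop := WellOrderingRel
  haveI : IsWellOrder B r := WellOrderingRel.isWellOrder
  have wf : WellFounded r := IsWellFounded.wf
  set c : B → ℕ := WellFounded.fix wf
    (fun x ih => sInf {m : ℕ | ∀ y, E x y → ∀ h : r y x, ih y h ≠ m}) with hc
  have hceq : ∀ x, c x = sInf {m : ℕ | ∀ y, E x y → r y x → c y ≠ m} := by
    intro x
    rw [hc, WellFounded.fix_eq]
  have hgood : ∀ x, {m : ℕ | ∀ y, E x y → r y x → c y ≠ m}.Nonempty ∧
      sInf {m : ℕ | ∀ y, E x y → r y x → c y ≠ m} ≤ d := by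
    intro x
    have hsubset : {m : ℕ | ∃ y, E x y ∧ r y x ∧ c y = m} ⊆ c '' {y | E x y} := by
      rintro m ⟨y, hy, _, hcy⟩
      exact ⟨y, hy, hcy⟩
    have hfin : {m : ℕ | ∃ y, E x y ∧ r y x ∧ c y = m}.Finite :=
      (((hdeg x).1).image c).subset hsubset
    have hcard : {m : ℕ | ∃ y, E x y ∧ r y x ∧ c y = m}.ncard ≤ d :=
      le_trans (Set.ncard_le_ncard hsubset ((hdeg x).1.image c))
        (le_trans (Set.ncard_image_le (hdeg x).1) (hdeg x).2)
    have : ∃ m ≤ d, m ∉ {m : ℕ | ∃ y, E x y ∧ r y x ∧ c y = m} := by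
      by_contra hcon
      push_neg at hcon
      have hsub2 : (Finset.range (d + 1) : Set ℕ) ⊆ {m : ℕ | ∃ y, E x y ∧ r y x ∧ c y = m} := by
        intro m hm
        simp only [Finset.coe_range, Set.mem_Iio] at hm
        exact hcon m (Nat.lt_succ_iff.1 hm)
      have := Set.ncard_le_ncard hsub2 hfin
      rw [Set.ncard_coe_finset, Finset.card_range] at this
      omega
    obtain ⟨m, hmd, hm⟩ := this
    have hmem : m ∈ {m : ℕ | ∀ y, E x y → r y x → c y ≠ m} := by
      intro y hy hr hcy
      exact hm ⟨y, hy, hr, hcy⟩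
    exact ⟨⟨m, hmem⟩, le_trans (Nat.sInf_le hmem) hmd⟩
  refine ⟨c, fun x => by rw [hceq x]; exact (hgood x).2, ?_⟩
  have hdiff : ∀ x y, E x y → r y x → c y ≠ c x := by
    intro x y hy hr
    have := Nat.sInf_mem (hgood x).1
    rw [← hceq x] at this
    exact this y hy hr
  intro x y hE hne
  rcases trichotomous_of r x y with hr | hr | hr
  · exact hdiff y x (hsym x y hE) hr
  · exact absurd hr hne
  · exact fun hxy => hdiff x y hE hr hxy.symm
end

section
open Set


variable {A : Type*}

/-- Interference between the `n`-neighborhoods of `w` and `w'`. -/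
def Cross (R : A → A → Prop) (n : ℕ) (w w' : A) : Prop :=
  w ≠ w' ∧ ∃ a ∈ nbhd (SRel R) w n, ∃ b ∈ nbhd (SRel R) w' n, a = b ∨ SRel R a b ∨ SRel R b a

lemma Cross.symm {R : A → A → Prop} {n : ℕ} {w w' : A} (h : Cross R n w w') : Cross R n w' w := by
  obtain ⟨hne, a, ha, b, hb, hab⟩ := h
  exact ⟨hne.symm, b, hb, a, ha, by tauto⟩

lemma cross_subset {R : A → A → Prop} {n : ℕ} {w : A} :
    {w' | Cross R n w w'} ⊆ nbhd (SRel R) w (2 * n + 1) := by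
  rintro w' ⟨hne, a, ha, b, hb, hab⟩
  have hb' : b ∈ nbhd (SRel R) w (n + 1) := by
    rcases hab with rfl | hS | hS
    · exact nbhd_succ_subset _ _ _ ha
    · exact mem_nbhd_succ_of_edge ha (Or.inl hS)
    · exact mem_nbhd_succ_of_edge ha (Or.inr hS)
  have hw' : w' ∈ nbhd (SRel R) b n := mem_nbhd_symm hb
  have := nbhd_trans hw' hb'
  exact nbhd_mono _ _ (by omega) this

lemma exists_fiber_mem {ι : Type*} (v : Ultrafilter A) (c : A → ι)
    (hfin : (Set.range c).Finite) : ∃ i, c ⁻¹' {i} ∈ v := by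
  have huniv : (⋃ i ∈ Set.range c, c ⁻¹' {i}) = Set.univ := by
    ext a
    simp only [Set.mem_iUnion, Set.mem_preimage, Set.mem_singleton_iff, Set.mem_univ, iff_true]
    exact ⟨c a, ⟨a, rfl⟩, rfl⟩
  have : (⋃ i ∈ Set.range c, c ⁻¹' {i}) ∈ v := by rw [huniv]; exact Filter.univ_mem
  obtain ⟨i, _, hi⟩ := (Ultrafilter.finite_biUnion_mem_iff hfin).1 this
  exact ⟨i, hi⟩

/-- Every ultrafilter contains a set in which distinct points have non-interfering
`n`-neighborhoods. -/
lemma exists_nocross {R : A → A → Prop} (h : AlmostBounded R) (v : Ultrafilter A) (n : ℕ) :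
    ∃ Y ∈ v, ∀ w ∈ Y, ∀ w' ∈ Y, ¬ Cross R n w w' := by
  classical
  obtain ⟨N, hN⟩ := nbhd_sRel_ncard_le h (2 * n + 1)
  obtain ⟨c, hcle, hc⟩ := exists_coloring (Cross R n) (fun _ _ => Cross.symm) N
    (fun w => ⟨(nbhd_sRel_finite R w (2 * n + 1)).subset cross_subset,
      le_trans (Set.ncard_le_ncard cross_subset (nbhd_sRel_finite R w (2 * n + 1))) (hN w)⟩)
  have hfin : (Set.range c).Finite := by
    refine Set.Finite.subset (Set.finite_Iic N) ?_
    rintro i ⟨x, rfl⟩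
    exact hcle x
  obtain ⟨i, hi⟩ := exists_fiber_mem v c hfin
  refine ⟨c ⁻¹' {i}, hi, fun w hw w' hw' hcross => ?_⟩
  exact hc w w' hcross hcross.1 (by rw [Set.mem_preimage, Set.mem_singleton_iff] at hw hw'; rw [hw, hw'])
end

section
open Set


variable {A : Type*}

/-- Pointed `P`-isomorphism of `n`-neighborhoods inside the base structure. -/
def PIsoAA (R : A → A → Prop) (sB sC : Set A) (b c : A) : Prop :=
  IsPIsoOn (RInf R) (SRel R) (fun x t => PRel R x t) (fun t x => PRel R t x)
    (SRel R) (fun x t => PRel R x t) (fun t x => PRel R t x) sB sC b c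

/-- In every ultrafilter there is a set on which all points have pairwise
`P`-isomorphic `n`-neighborhoods. -/
lemma exists_uniform_class {R : A → A → Prop} (h : AlmostBounded R) (v : Ultrafilter A)
    (n : ℕ) :
    ∃ C ∈ v, ∀ w ∈ C, ∀ w' ∈ C,
      PIsoAA R (nbhd (SRel R) w n) (nbhd (SRel R) w' n) w w' := by
  classical
  obtain ⟨N, hN⟩ := nbhd_sRel_ncard_le h n
  set Tf : Finset A := h.1.toFinset with hTf
  set Fw : A → Finset A := fun w => (nbhd_sRel_finite R w n).toFinset with hFw
  have memFw : ∀ {w a : A}, a ∈ Fw w ↔ a ∈ nbhd (SRel R) w n := by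
    intro w a; simp [hFw, Set.Finite.mem_toFinset]
  set cW : A → ℕ := fun w => (Fw w).card with hcW
  have hcWN : ∀ w, cW w ≤ N := by
    intro w
    have : (Fw w).card = (nbhd (SRel R) w n).ncard :=
      (Set.ncard_eq_toFinset_card _ (nbhd_sRel_finite R w n)).symm
    rw [hcW]; simp only [this]; exact hN w
  set eW : ∀ w : A, ↥(Fw w) ≃ Fin (cW w) := fun w => (Fw w).equivFin with heW
  set idxW : A → A → ℕ := fun w a => if ha : a ∈ Fw w then (eW w ⟨a, ha⟩).val else 0 with hidxW
  set elW : A → ℕ → A := fun w i => if hi : i < cW w then ((eW w).symm ⟨i, hi⟩ : A) else w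
    with helW
  -- helper facts
  have idx_lt : ∀ {w a}, a ∈ Fw w → idxW w a < cW w := by
    intro w a ha
    simp only [hidxW, dif_pos ha]
    exact (eW w ⟨a, ha⟩).2
  have el_mem : ∀ {w i}, i < cW w → elW w i ∈ Fw w := by
    intro w i hi
    simp only [helW, dif_pos hi]
    exact ((eW w).symm ⟨i, hi⟩).2
  have el_idx : ∀ {w a}, a ∈ Fw w → elW w (idxW w a) = a := by
    intro w a ha
    simp only [hidxW, dif_pos ha, helW, dif_pos (eW w ⟨a, ha⟩).2]
    have : (⟨((eW w) ⟨a, ha⟩).val, ((eW w) ⟨a, ha⟩).2⟩ : Fin (cW w)) = (eW w) ⟨a, ha⟩ :=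
      Fin.ext rfl
    rw [this, Equiv.symm_apply_apply]
  have idx_el : ∀ {w i}, i < cW w → idxW w (elW w i) = i := by
    intro w i hi
    have hmem : elW w i ∈ Fw w := el_mem hi
    simp only [hidxW, dif_pos hmem]
    have : (⟨elW w i, hmem⟩ : ↥(Fw w)) = (eW w).symm ⟨i, hi⟩ := by
      apply Subtype.ext
      simp only [helW, dif_pos hi]
    rw [this, Equiv.apply_symm_apply]
  -- the code function
  set SF : A → Finset (ℕ × ℕ) := fun w =>
    ((Finset.range (cW w)) ×ˢ (Finset.range (cW w))).filter
      (fun p => SRel R (elW w p.1) (elW w p.2)) with hSF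
  set PrF : A → Finset (ℕ × A) := fun w =>
    ((Finset.range (cW w)) ×ˢ Tf).filter (fun p => PRel R (elW w p.1) p.2) with hPrF
  set PlF : A → Finset (ℕ × A) := fun w =>
    ((Finset.range (cW w)) ×ˢ Tf).filter (fun p => PRel R p.2 (elW w p.1)) with hPlF
  set code : A → ℕ × ℕ × Finset (ℕ × ℕ) × Finset (ℕ × A) × Finset (ℕ × A) :=
    fun w => (cW w, idxW w w, SF w, PrF w, PlF w) with hcode
  have memSF : ∀ {w i j}, (i, j) ∈ SF w ↔
      i < cW w ∧ j < cW w ∧ SRel R (elW w i) (elW w j) := by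
    intro w i j
    simp [hSF, Finset.mem_filter, Finset.mem_product, and_assoc]
  have memPrF : ∀ {w i t}, (i, t) ∈ PrF w ↔ i < cW w ∧ t ∈ RInf R ∧ PRel R (elW w i) t := by
    intro w i t
    simp [hPrF, Finset.mem_filter, Finset.mem_product, and_assoc, hTf, Set.Finite.mem_toFinset]
  have memPlF : ∀ {w i t}, (i, t) ∈ PlF w ↔ i < cW w ∧ t ∈ RInf R ∧ PRel R t (elW w i) := by
    intro w i t
    simp [hPlF, Finset.mem_filter, Finset.mem_product, and_assoc, hTf, Set.Finite.mem_toFinset]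
  -- range of code is finite
  have hrange : (Set.range code).Finite := by
    have h1 : (Set.Iic N).Finite := Set.finite_Iic N
    have h2 : {F : Finset (ℕ × ℕ) | F ∈ (Finset.range N ×ˢ Finset.range N).powerset}.Finite :=
      Set.finite_mem_finset _
    have h3 : {F : Finset (ℕ × A) | F ∈ ((Finset.range N) ×ˢ Tf).powerset}.Finite :=
      Set.finite_mem_finset _
    refine Set.Finite.subset (((h1.prod (h1.prod (h2.prod (h3.prod h3)))))) ?_
    rintro x ⟨w, rfl⟩
    refine ⟨hcWN w, ?_, ?_, ?_, ?_⟩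
    · by_cases hww : w ∈ Fw w
      · exact le_of_lt (lt_of_lt_of_le (idx_lt hww) (hcWN w))
      · show idxW w w ≤ N; simp only [hidxW, dif_neg hww]; exact Nat.zero_le N
    · simp only [Set.mem_setOf_eq, Finset.mem_powerset]
      intro p hp
      rw [show p = (p.1, p.2) from rfl, memSF] at hp
      exact Finset.mem_product.2 ⟨Finset.mem_range.2 (lt_of_lt_of_le hp.1 (hcWN w)),
        Finset.mem_range.2 (lt_of_lt_of_le hp.2.1 (hcWN w))⟩
    · simp only [Set.mem_setOf_eq, Finset.mem_powerset]
      intro p hp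
      rw [show p = (p.1, p.2) from rfl, memPrF] at hp
      exact Finset.mem_product.2 ⟨Finset.mem_range.2 (lt_of_lt_of_le hp.1 (hcWN w)),
        by rw [hTf, Set.Finite.mem_toFinset]; exact hp.2.1⟩
    · simp only [Set.mem_setOf_eq, Finset.mem_powerset]
      intro p hp
      rw [show p = (p.1, p.2) from rfl, memPlF] at hp
      exact Finset.mem_product.2 ⟨Finset.mem_range.2 (lt_of_lt_of_le hp.1 (hcWN w)),
        by rw [hTf, Set.Finite.mem_toFinset]; exact hp.2.1⟩
  obtain ⟨cd, hcd⟩ := exists_fiber_mem v code hrange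
  refine ⟨code ⁻¹' {cd}, hcd, fun w hw w' hw' => ?_⟩
  have hcodes : code w = code w' := by
    rw [Set.mem_preimage, Set.mem_singleton_iff] at hw hw'
    rw [hw, hw']
  have hc : cW w = cW w' := congrArg (fun x => x.1) hcodes
  have hbidx : idxW w w = idxW w' w' := congrArg (fun x => x.2.1) hcodes
  have hSeq : SF w = SF w' := congrArg (fun x => x.2.2.1) hcodes
  have hPr : PrF w = PrF w' := congrArg (fun x => x.2.2.2.1) hcodes
  have hPl : PlF w = PlF w' := congrArg (fun x => x.2.2.2.2) hcodes
  have hwF : w ∈ Fw w := memFw.2 (base_mem_nbhd _ _ _)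
  have hw'F : w' ∈ Fw w' := memFw.2 (base_mem_nbhd _ _ _)
  -- build the equivalence
  have htoMem : ∀ x : ↥(nbhd (SRel R) w n), elW w' (idxW w x) ∈ nbhd (SRel R) w' n := by
    intro x
    have hx : (x : A) ∈ Fw w := memFw.2 x.2
    exact memFw.1 (el_mem (by rw [← hc]; exact idx_lt hx))
  have hinvMem : ∀ y : ↥(nbhd (SRel R) w' n), elW w (idxW w' y) ∈ nbhd (SRel R) w n := by
    intro y
    have hy : (y : A) ∈ Fw w' := memFw.2 y.2
    exact memFw.1 (el_mem (by rw [hc]; exact idx_lt hy))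
  refine ⟨⟨fun x => ⟨elW w' (idxW w x), htoMem x⟩, fun y => ⟨elW w (idxW w' y), hinvMem y⟩,
    ?_, ?_⟩, ?_, ?_, ?_⟩
  · intro x
    have hx : (x : A) ∈ Fw w := memFw.2 x.2
    apply Subtype.ext
    show elW w (idxW w' (elW w' (idxW w x))) = x
    rw [idx_el (by rw [← hc]; exact idx_lt hx), el_idx hx]
  · intro y
    have hy : (y : A) ∈ Fw w' := memFw.2 y.2
    apply Subtype.ext
    show elW w' (idxW w (elW w (idxW w' y))) = y
    rw [idx_el (by rw [hc]; exact idx_lt hy), el_idx hy]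
  · intro hb hc'
    apply Subtype.ext
    show elW w' (idxW w w) = w'
    rw [hbidx, el_idx hw'F]
  · intro x y
    have hx : (x : A) ∈ Fw w := memFw.2 x.2
    have hy : (y : A) ∈ Fw w := memFw.2 y.2
    constructor
    · intro hS
      have : (idxW w x, idxW w y) ∈ SF w := by
        rw [memSF]
        exact ⟨idx_lt hx, idx_lt hy, by rwa [el_idx hx, el_idx hy]⟩
      rw [hSeq, memSF] at this
      exact this.2.2
    · intro hS
      have : (idxW w x, idxW w y) ∈ SF w' := by
        rw [memSF]
        exact ⟨by rw [← hc]; exact idx_lt hx, by rw [← hc]; exact idx_lt hy, hS⟩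
      rw [← hSeq, memSF] at this
      have := this.2.2
      rwa [el_idx hx, el_idx hy] at this
  · intro x t ht
    have hx : (x : A) ∈ Fw w := memFw.2 x.2
    constructor
    · constructor
      · intro hP
        have : (idxW w x, t) ∈ PrF w := by
          rw [memPrF]
          exact ⟨idx_lt hx, ht, by rwa [el_idx hx]⟩
        rw [hPr, memPrF] at this
        exact this.2.2
      · intro hP
        have : (idxW w x, t) ∈ PrF w' := by
          rw [memPrF]
          exact ⟨by rw [← hc]; exact idx_lt hx, ht, hP⟩
        rw [← hPr, memPrF] at this
        have := this.2.2
        rwa [el_idx hx] at this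
    · constructor
      · intro hP
        have : (idxW w x, t) ∈ PlF w := by
          rw [memPlF]
          exact ⟨idx_lt hx, ht, by rwa [el_idx hx]⟩
        rw [hPl, memPlF] at this
        exact this.2.2
      · intro hP
        have : (idxW w x, t) ∈ PlF w' := by
          rw [memPlF]
          exact ⟨by rw [← hc]; exact idx_lt hx, ht, hP⟩
        rw [← hPl, memPlF] at this
        have := this.2.2
        rwa [el_idx hx] at this
end

section
open Set


variable {A : Type*}

lemma transfer {R : A → A → Prop} (v : Ultrafilter A) {W : Set A}
    (hWv : W ∈ v) {n : ℕ} {w₀ : A} (hw₀ : w₀ ∈ W)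
    (hiso : ∀ w (_ : w ∈ W), PIsoAA R (nbhd (SRel R) w₀ n) (nbhd (SRel R) w n) w₀ w)
    (hnc : ∀ w ∈ W, ∀ w' ∈ W, ¬ Cross R n w w') :
    PIsoUeA R (nbhd (ueRel (SRel R)) v n) (nbhd (SRel R) w₀ n) v w₀ := by
  classical
  set S := SRel R with hSdef
  set T : Set A := nbhd S w₀ n with hT
  choose g hgbase hgS hgP using hiso
  set φ : ↥T → A → A := fun t w => if hw : w ∈ W then ((g w hw t : A)) else (t : A) with hφ
  set f : ↥T → Ultrafilter A := fun t => Ultrafilter.map (φ t) v with hf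
  have memf : ∀ (t : ↥T) (X : Set A),
      X ∈ f t ↔ {w | ∃ hw : w ∈ W, ((g w hw t : A)) ∈ X} ∈ v := by
    intro t X
    rw [hf]
    simp only [Ultrafilter.mem_map]
    constructor
    · intro hp
      refine Filter.mem_of_superset (v.inter_mem hp hWv) ?_
      rintro w ⟨hw1, hw2⟩
      refine ⟨hw2, ?_⟩
      have hw1' : φ t w ∈ X := hw1
      simp only [hφ, dif_pos hw2] at hw1'
      exact hw1' 
    · intro hp
      refine Filter.mem_of_superset (v.inter_mem hp hWv) ?_
      rintro w ⟨⟨hw, hgw⟩, hw2⟩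
      show φ t w ∈ X
      simpa only [hφ, dif_pos hw2] using hgw
  -- the level correspondence inside each w-neighborhood
  have glevel : ∀ (w : A) (hw : w ∈ W) (m : ℕ), m ≤ n → ∀ t : ↥T,
      (t : A) ∈ nbhd S w₀ m ↔ ((g w hw t : A)) ∈ nbhd S w m := by
    intro w hw m hm
    exact level_iff (g w hw) (hgbase w hw) (hgS w hw)
      (subset_refl _) (subset_refl _) m hm
  have gmem : ∀ (w : A) (hw : w ∈ W) (t : ↥T), ((g w hw t : A)) ∈ nbhd S w n :=
    fun w hw t => (g w hw t).2
  -- base point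
  have hw₀T : w₀ ∈ T := base_mem_nbhd _ _ _
  set t₀ : ↥T := ⟨w₀, hw₀T⟩ with ht₀
  have gbaseval : ∀ (w : A) (hw : w ∈ W) (t : ↥T), (t : A) = w₀ → ((g w hw t : A)) = w := by
    intro w hw t ht
    have : t = ⟨w₀, hw₀T⟩ := Subtype.ext ht
    rw [this, hgbase w hw hw₀T (base_mem_nbhd _ _ _)]
  have fbase : ∀ t : ↥T, (t : A) = w₀ → f t = v := by
    intro t ht
    refine Ultrafilter.coe_injective (Filter.ext fun X => ?_)
    show X ∈ f t ↔ X ∈ v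
    rw [memf]
    constructor
    · intro hX
      refine Filter.mem_of_superset (v.inter_mem hX hWv) ?_
      rintro w ⟨⟨hw, hgw⟩, hw2⟩
      rwa [gbaseval w hw t ht] at hgw
    · intro hX
      refine Filter.mem_of_superset (v.inter_mem hX hWv) ?_
      rintro w ⟨hw1, hw2⟩
      exact ⟨hw2, by rwa [gbaseval w hw2 t ht]⟩
  -- no-cross consequences
  have nocross_eq : ∀ {w w' : A} (hw : w ∈ W) (hw' : w' ∈ W) {a b : A},
      a ∈ nbhd S w n → b ∈ nbhd S w' n → (a = b ∨ S a b ∨ S b a) → w = w' := by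
    intro w w' hw hw' a b ha hb hab
    by_contra hne
    exact hnc w hw w' hw' ⟨hne, a, ha, b, hb, hab⟩
  have ginj : ∀ {w w' : A} (hw : w ∈ W) (hw' : w' ∈ W) (t t' : ↥T),
      ((g w hw t : A)) = ((g w' hw' t' : A)) → w = w' ∧ t = t' := by
    intro w w' hw hw' t t' heq
    have hww' : w = w' := nocross_eq hw hw' (gmem w hw t) (gmem w' hw' t') (Or.inl heq)
    subst hww'
    refine ⟨rfl, ?_⟩
    have : g w hw t = g w hw t' := Subtype.ext heq
    exact (g w hw).injective this
  -- forward edges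
  have fedge : ∀ t t' : ↥T, S (t : A) (t' : A) → ueRel S (f t) (f t') := by
    intro t t' hS
    refine ueRel_map v hWv (g := φ t) (g' := φ t') ?_
    intro w hw
    simp only [hφ, dif_pos hw]
    exact (hgS w hw t t').1 hS
  -- the canonical image sets
  set Zt : ↥T → Set A := fun t => {a | ∃ w, ∃ hw : w ∈ W, a = ((g w hw t : A))} with hZt
  have Zt_mem : ∀ t : ↥T, Zt t ∈ f t := by
    intro t
    rw [memf]
    refine Filter.mem_of_superset hWv ?_
    intro w hw
    exact ⟨hw, w, hw, rfl⟩
  -- reverse edges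
  have fedge_rev : ∀ t t' : ↥T, ueRel S (f t) (f t') → S (t : A) (t' : A) := by
    intro t t' hue
    have h1 := hue (Zt t') (Zt_mem t')
    rw [memf] at h1
    obtain ⟨w, ⟨hw, s, hsmem, hSs⟩⟩ := Ultrafilter.nonempty_of_mem h1
    obtain ⟨w', hw', rfl⟩ := hsmem
    have hww' : w = w' := nocross_eq hw hw' (gmem w hw t) (gmem w' hw' t') (Or.inr (Or.inl hSs))
    subst hww'
    have : S ((g w hw t : A)) ((g w hw t' : A)) := hSs
    exact (hgS w hw t t').2 this
  -- decorations
  have fPr : ∀ (t : ↥T) (r : A), r ∈ RInf R →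
      (ueRel (PRel R) (f t) (pure r) ↔ PRel R (t : A) r) := by
    intro t r hr
    rw [ueRel_pure_right, memf]
    constructor
    · intro hX
      obtain ⟨w, hw, hP⟩ := Ultrafilter.nonempty_of_mem hX
      exact ((hgP w hw t r hr).1).2 hP
    · intro hP
      refine Filter.mem_of_superset hWv ?_
      intro w hw
      exact ⟨hw, ((hgP w hw t r hr).1).1 hP⟩
  have fPl : ∀ (t : ↥T) (r : A), r ∈ RInf R →
      (ueRel (PRel R) (pure r) (f t) ↔ PRel R r (t : A)) := by
    intro t r hr
    rw [ueRel_pure_left, memf]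
    constructor
    · intro hX
      obtain ⟨w, hw, hP⟩ := Ultrafilter.nonempty_of_mem hX
      exact ((hgP w hw t r hr).2).2 hP
    · intro hP
      refine Filter.mem_of_superset hWv ?_
      intro w hw
      exact ⟨hw, ((hgP w hw t r hr).2).1 hP⟩
  -- image lands in the neighborhood of v
  have flevel : ∀ (m : ℕ), m ≤ n → ∀ t : ↥T, (t : A) ∈ nbhd S w₀ m →
      f t ∈ nbhd (ueRel S) v m := by
    intro m
    induction m with
    | zero =>
      intro _ t ht
      have : f t = v := fbase t ht
      rw [this]; exact rfl
    | succ m ih =>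
      intro hm t ht
      rcases ht with ht | ⟨x, hx, hedge⟩
      · exact nbhd_succ_subset _ _ _ (ih (Nat.le_of_succ_le hm) t ht)
      · have hxT : x ∈ T := nbhd_mono _ _ (le_trans (Nat.le_succ m) hm) hx
        have hfx : f ⟨x, hxT⟩ ∈ nbhd (ueRel S) v m := ih (Nat.le_of_succ_le hm) ⟨x, hxT⟩ hx
        refine mem_nbhd_succ_of_edge hfx ?_
        rcases hedge with he | he
        · exact Or.inl (fedge ⟨x, hxT⟩ t he)
        · exact Or.inr (fedge t ⟨x, hxT⟩ he)
  -- surjectivity onto the neighborhood of v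
  have key3 : ∀ (t'' : ↥T) (q : Ultrafilter A), Zt t'' ∈ q →
      ((∃ t' : ↥T, ueRel S (f t') q ∨ ueRel S q (f t')) → True) → True := fun _ _ _ _ => trivial
  -- step 3 shared argument: if `Zt t'' ∈ q` and `q` is ue-adjacent to some `f t'`,
  -- then `q = f t''`
  have step3succ : ∀ (t' t'' : ↥T) (q : Ultrafilter A), ueRel S (f t') q → Zt t'' ∈ q →
      f t'' = q := by
    intro t' t'' q hue hZ
    refine Ultrafilter.eq_of_le (Filter.le_def.2 fun X hX => ?_)
    have hX' : X ∩ Zt t'' ∈ q := q.inter_mem hX hZ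
    by_contra hnot
    have hY' : {w | ∃ hw : w ∈ W, ((g w hw t'' : A)) ∈ X ∩ Zt t''}ᶜ ∈ v := by
      rw [Ultrafilter.compl_mem_iff_notMem]
      intro hmem
      exact hnot (Filter.mem_of_superset ((memf t'' (X ∩ Zt t'')).2 hmem) Set.inter_subset_left)
    have hE := hue (X ∩ Zt t'') hX'
    rw [memf] at hE
    obtain ⟨w, hw12⟩ := Ultrafilter.nonempty_of_mem (v.inter_mem hE hY')
    obtain ⟨⟨hw, s, hsX, hSs⟩, hwc⟩ := hw12
    obtain ⟨w', hw', hseq⟩ := hsX.2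
    have hww' : w = w' := nocross_eq hw hw' (gmem w hw t') (gmem w' hw' t'')
      (Or.inr (Or.inl (by rwa [hseq] at hSs)))
    subst hww'
    refine hwc ⟨hw, ?_⟩
    have : ((g w hw t'' : A)) = s := by rw [hseq]
    rwa [this]
  have step3pred : ∀ (t' t'' : ↥T) (q : Ultrafilter A), ueRel S q (f t') → Zt t'' ∈ q →
      f t'' = q := by
    intro t' t'' q hue hZ
    refine Ultrafilter.eq_of_le (Filter.le_def.2 fun X hX => ?_)
    have hX' : X ∩ Zt t'' ∈ q := q.inter_mem hX hZ
    by_contra hnot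
    have hY' : {w | ∃ hw : w ∈ W, ((g w hw t'' : A)) ∈ X ∩ Zt t''}ᶜ ∈ v := by
      rw [Ultrafilter.compl_mem_iff_notMem]
      intro hmem
      exact hnot (Filter.mem_of_superset ((memf t'' (X ∩ Zt t'')).2 hmem) Set.inter_subset_left)
    set Xtest : Set A := {a | ∃ w, ∃ hw : w ∈ W,
      w ∈ {w | ∃ hw : w ∈ W, ((g w hw t'' : A)) ∈ X ∩ Zt t''}ᶜ ∧ a = ((g w hw t' : A))}
      with hXtest
    have hXtest_mem : Xtest ∈ f t' := by
      rw [memf]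
      refine Filter.mem_of_superset (v.inter_mem hWv hY') ?_
      rintro w ⟨hw, hwc⟩
      exact ⟨hw, w, hw, hwc, rfl⟩
    have hB := hue Xtest hXtest_mem
    obtain ⟨b, hb12⟩ := Ultrafilter.nonempty_of_mem (q.inter_mem hB hX')
    obtain ⟨⟨s, hsX, hSbs⟩, hbX'⟩ := hb12
    obtain ⟨w2, hw2, hw2c, hseq⟩ := hsX
    obtain ⟨w1, hw1, hbeq⟩ := hbX'.2
    have hww : w1 = w2 := nocross_eq hw1 hw2 (gmem w1 hw1 t'') (gmem w2 hw2 t')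
      (Or.inr (Or.inl (by rw [← hbeq, ← hseq]; exact hSbs)))
    subst hww
    refine hw2c ⟨hw1, ?_⟩
    rwa [← hbeq]
  have fsurj : ∀ (m : ℕ), m ≤ n → ∀ q ∈ nbhd (ueRel S) v m,
      ∃ t : ↥T, (t : A) ∈ nbhd S w₀ m ∧ f t = q := by
    intro m
    induction m with
    | zero =>
      intro _ q hq
      have hq' : q = v := hq
      exact ⟨t₀, base_mem_nbhd _ _ _, by rw [fbase t₀ rfl, hq']⟩
    | succ m ih =>
      intro hm q hq
      have hmn : m ≤ n := Nat.le_of_succ_le hm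
      rcases hq with hq | ⟨q', hq', hedge⟩
      · obtain ⟨t, htm, hft⟩ := ih hmn q hq
        exact ⟨t, nbhd_succ_subset _ _ _ htm, hft⟩
      obtain ⟨t', ht'm, hft'⟩ := ih hmn q' hq'
      rw [← hft'] at hedge
      rcases hedge with hue | hue
      · -- successor case
        set Dsub : Set (↥T) := {t'' | S (t' : A) (t'' : A)} with hDsub
        have hDfin : Dsub.Finite := by
          have h1 : ((Subtype.val : ↥T → A) ⁻¹' {s | S (t' : A) s}).Finite :=
            Set.Finite.preimage (Subtype.val_injective.injOn)
              (sSucc_finite R (t' : A))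
          exact h1.subset (fun x hx => hx)
        have claim1 : (⋃ t'' ∈ Dsub, Zt t'') ∈ q := by
          by_contra hc
          have hcompl : (⋃ t'' ∈ Dsub, Zt t'')ᶜ ∈ q := (Ultrafilter.compl_mem_iff_notMem).2 hc
          have hE := hue _ hcompl
          rw [memf] at hE
          obtain ⟨w, hw, s, hsc, hSs⟩ := Ultrafilter.nonempty_of_mem hE
          have hsw : s ∈ nbhd S w (m + 1) :=
            mem_nbhd_succ_of_edge ((glevel w hw m hmn t').1 ht'm) (Or.inl hSs)
          have hswn : s ∈ nbhd S w n := nbhd_mono _ _ hm hsw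
          set t'' : ↥T := (g w hw).symm ⟨s, hswn⟩ with ht''
          have hgt'' : ((g w hw t'' : A)) = s := by
            rw [ht'', Equiv.apply_symm_apply]
          have hD : t'' ∈ Dsub := by
            rw [hDsub]
            refine (hgS w hw t' t'').2 ?_
            rwa [hgt'']
          exact hsc (Set.mem_biUnion hD ⟨w, hw, hgt''.symm⟩)
        obtain ⟨t'', hD, hZ⟩ := (Ultrafilter.finite_biUnion_mem_iff hDfin).1 claim1
        refine ⟨t'', ?_, (step3succ t' t'' q hue hZ)⟩
        exact mem_nbhd_succ_of_edge ht'm (Or.inl hD)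
      · -- predecessor case
        set Dsub : Set (↥T) := {t'' | S (t'' : A) (t' : A)} with hDsub
        have hDfin : Dsub.Finite := by
          have h1 : ((Subtype.val : ↥T → A) ⁻¹' {s | S s (t' : A)}).Finite :=
            Set.Finite.preimage (Subtype.val_injective.injOn)
              (sPred_finite R (t' : A))
          exact h1.subset (fun x hx => hx)
        have claim1 : (⋃ t'' ∈ Dsub, Zt t'') ∈ q := by
          by_contra hc
          have hcompl : (⋃ t'' ∈ Dsub, Zt t'')ᶜ ∈ q := (Ultrafilter.compl_mem_iff_notMem).2 hc
          have hB := hue _ (Zt_mem t')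
          obtain ⟨b, hbB, hbc⟩ := Ultrafilter.nonempty_of_mem (q.inter_mem hB hcompl)
          obtain ⟨s, hsZ, hSbs⟩ := hbB
          obtain ⟨w, hw, hseq⟩ := hsZ
          have hsw : s ∈ nbhd S w m := by rw [hseq]; exact (glevel w hw m hmn t').1 ht'm
          have hbw : b ∈ nbhd S w (m + 1) := mem_nbhd_succ_of_edge hsw (Or.inr hSbs)
          have hbwn : b ∈ nbhd S w n := nbhd_mono _ _ hm hbw
          set t'' : ↥T := (g w hw).symm ⟨b, hbwn⟩ with ht''
          have hgt'' : ((g w hw t'' : A)) = b := by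
            rw [ht'', Equiv.apply_symm_apply]
          have hD : t'' ∈ Dsub := by
            rw [hDsub]
            refine (hgS w hw t'' t').2 ?_
            rw [hgt'', ← hseq] at *
            exact hSbs
          exact hbc (Set.mem_biUnion hD ⟨w, hw, hgt''.symm⟩)
        obtain ⟨t'', hD, hZ⟩ := (Ultrafilter.finite_biUnion_mem_iff hDfin).1 claim1
        refine ⟨t'', ?_, (step3pred t' t'' q hue hZ)⟩
        exact mem_nbhd_succ_of_edge ht'm (Or.inr hD)
  -- assemble
  have toMem : ∀ t : ↥T, f t ∈ nbhd (ueRel S) v n := fun t => flevel n le_rfl t t.2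
  have hbij : Function.Bijective (fun t : ↥T => (⟨f t, toMem t⟩ : ↥(nbhd (ueRel S) v n))) := by
    constructor
    · intro t t' heq
      have heq' : f t = f t' := congrArg Subtype.val heq
      by_contra hne
      -- use injectivity: f t = f t' → t = t'
      have h1 := Zt_mem t
      rw [heq'] at h1
      rw [memf] at h1
      obtain ⟨w, hw, hmem⟩ := Ultrafilter.nonempty_of_mem h1
      obtain ⟨w', hw', heq2⟩ := hmem
      obtain ⟨-, ht⟩ := ginj hw hw' t' t heq2
      exact hne ht.symm
    · rintro ⟨q, hq⟩
      obtain ⟨t, -, hft⟩ := fsurj n le_rfl q hq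
      exact ⟨t, Subtype.ext hft⟩
  have main : IsPIsoOn (RInf R) S (fun x t => PRel R x t) (fun t x => PRel R t x)
      (ueRel S) (fun x t => ueRel (PRel R) x (pure t)) (fun t x => ueRel (PRel R) (pure t) x)
      T (nbhd (ueRel S) v n) w₀ v := by
    refine ⟨Equiv.ofBijective _ hbij, ?_, ?_, ?_⟩
    · intro hb hc
      apply Subtype.ext
      show f ⟨w₀, hb⟩ = v
      exact fbase _ rfl
    · intro x y
      exact ⟨fedge x y, fedge_rev x y⟩
    · intro x r hr
      exact ⟨(fPr x r hr).symm, (fPl x r hr).symm⟩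
  exact main.symm
end

section
open Set


variable {A : Type*}

/-- Any ultrafilter has a large set of points whose `n`-neighborhoods are `P`-isomorphic
to its own ue-`n`-neighborhood. -/
lemma exists_local_class {R : A → A → Prop} (h : AlmostBounded R) (v : Ultrafilter A) (n : ℕ) :
    ∃ C ∈ v, ∀ w ∈ C, PIsoUeA R (nbhd (ueRel (SRel R)) v n) (nbhd (SRel R) w n) v w := by
  obtain ⟨C₁, hC₁, hiso⟩ := exists_uniform_class h v n
  obtain ⟨Y, hY, hnc⟩ := exists_nocross h v n
  set C := C₁ ∩ Y with hC
  have hCv : C ∈ v := v.inter_mem hC₁ hY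
  obtain ⟨w₀, hw₀⟩ := Ultrafilter.nonempty_of_mem hCv
  have htr : PIsoUeA R (nbhd (ueRel (SRel R)) v n) (nbhd (SRel R) w₀ n) v w₀ := by
    refine transfer v hCv hw₀ (fun w hw => hiso w₀ hw₀.1 w hw.1) ?_
    intro w hw w' hw'
    exact hnc w hw.2 w' hw'.2
  refine ⟨C, hCv, fun w hw => ?_⟩
  exact IsPIsoOn.trans (base_mem_nbhd _ _ _) htr (hiso w₀ hw₀.1 w hw.1)

/-- The ue-neighborhoods of any ultrafilter are finite. -/
lemma nbhd_ue_finite {R : A → A → Prop} (h : AlmostBounded R) (v : Ultrafilter A) (n : ℕ) :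
    (nbhd (ueRel (SRel R)) v n).Finite := by
  obtain ⟨C, hC, hiso⟩ := exists_local_class h v n
  obtain ⟨w, hw⟩ := Ultrafilter.nonempty_of_mem hC
  obtain ⟨f, -, -, -⟩ := hiso w hw
  have hfin : (nbhd (SRel R) w n).Finite := nbhd_sRel_finite R w n
  haveI : Finite ↥(nbhd (SRel R) w n) := hfin.to_subtype
  haveI : Finite ↥(nbhd (ueRel (SRel R)) v n) := Finite.of_equiv _ f.symm
  exact Set.toFinite _
/-- level-`n` characterization. -/
lemma level_mem_iff {R : A → A → Prop} (h : AlmostBounded R) (u v : Ultrafilter A) (n : ℕ) :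
    PIsoUeUe R (nbhd (ueRel (SRel R)) u n) (nbhd (ueRel (SRel R)) v n) u v ↔
    {w | PIsoUeA R (nbhd (ueRel (SRel R)) u n) (nbhd (SRel R) w n) u w} ∈ v := by
  obtain ⟨C, hC, hiso⟩ := exists_local_class h v n
  constructor
  · intro huv
    refine Filter.mem_of_superset hC ?_
    intro w hw
    exact IsPIsoOn.trans (base_mem_nbhd _ _ _) huv (hiso w hw)
  · intro hV
    obtain ⟨w, hwV, hwC⟩ := Ultrafilter.nonempty_of_mem (v.inter_mem hV hC)
    exact IsPIsoOn.trans (base_mem_nbhd _ _ _) hwV (hiso w hwC).symm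
end

section
open Set CategoryTheory


variable {A B C : Type*}

/-- Gluing level isomorphisms along an inverse limit into an isomorphism of
ω-neighborhoods. -/
lemma IsPIsoOn.glue {Rinf : Set A} {SB : B → B → Prop} {PBr : B → A → Prop} {PBl : A → B → Prop}
    {SC : C → C → Prop} {PCr : C → A → Prop} {PCl : A → C → Prop} {b : B} {c : C}
    (hfinB : ∀ n : ℕ, (nbhd SB b n).Finite)
    (hlevel : ∀ n : ℕ, IsPIsoOn Rinf SB PBr PBl SC PCr PCl (nbhd SB b n) (nbhd SC c n) b c) :
    IsPIsoOn Rinf SB PBr PBl SC PCr PCl (onbhd SB b) (onbhd SC c) b c := by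
  classical
  let DT : ℕ → Type _ := fun n => {e : ↥(nbhd SB b n) ≃ ↥(nbhd SC c n) //
    (∀ (hb : b ∈ nbhd SB b n) (hc : c ∈ nbhd SC c n), e ⟨b, hb⟩ = ⟨c, hc⟩) ∧
    (∀ x y : ↥(nbhd SB b n), SB (x : B) (y : B) ↔ SC ((e x : C)) ((e y : C))) ∧
    (∀ x : ↥(nbhd SB b n), ∀ t ∈ Rinf,
      (PBr (x : B) t ↔ PCr ((e x : C)) t) ∧ (PBl t (x : B) ↔ PCl t ((e x : C))))}
  have hNE : ∀ n, Nonempty (DT n) := by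
    intro n
    obtain ⟨e, h1, h2, h3⟩ := hlevel n
    exact ⟨⟨e, h1, h2, h3⟩⟩
  have hFin : ∀ n, Finite (DT n) := by
    intro n
    haveI : Finite ↥(nbhd SB b n) := (hfinB n).to_subtype
    haveI : Finite ↥(nbhd SC c n) := Finite.of_equiv _ (Classical.choice (hNE n)).1
    haveI : Finite (↥(nbhd SB b n) ≃ ↥(nbhd SC c n)) :=
      Finite.of_injective (fun e => (e : ↥(nbhd SB b n) → ↥(nbhd SC c n)))
        (fun e e' he => Equiv.coe_fn_injective he)
    exact Subtype.finite
  -- restriction maps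
  have levkey : ∀ (n : ℕ) (e : DT (n + 1)) (x : ↥(nbhd SB b (n + 1))),
      (x : B) ∈ nbhd SB b n ↔ (e.1 x : C) ∈ nbhd SC c n := by
    intro n e x
    exact level_iff e.1 e.2.1 e.2.2.1 (subset_refl _) (subset_refl _) n (Nat.le_succ n) x
  let res : ∀ n : ℕ, DT (n + 1) → DT n := fun n e =>
    ⟨{ toFun := fun x => ⟨(e.1 ⟨(x : B), nbhd_succ_subset _ _ _ x.2⟩ : C),
        (levkey n e ⟨(x : B), nbhd_succ_subset _ _ _ x.2⟩).1 x.2⟩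
       invFun := fun y => ⟨(e.1.symm ⟨(y : C), nbhd_succ_subset _ _ _ y.2⟩ : B), by
        have := (levkey n e (e.1.symm ⟨(y : C), nbhd_succ_subset _ _ _ y.2⟩)).2
        rw [e.1.apply_symm_apply] at this
        exact this y.2⟩
       left_inv := by intro x; apply Subtype.ext; simp [Subtype.coe_eta]
       right_inv := by intro y; apply Subtype.ext; simp [Subtype.coe_eta] },
     by
      intro hb hc
      apply Subtype.ext
      show (e.1 ⟨b, _⟩ : C) = c
      rw [e.2.1 (nbhd_succ_subset _ _ _ hb) (nbhd_succ_subset _ _ _ hc)],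
     by
      intro x y
      exact e.2.2.1 ⟨(x : B), nbhd_succ_subset _ _ _ x.2⟩ ⟨(y : B), nbhd_succ_subset _ _ _ y.2⟩,
     by
      intro x t ht
      exact e.2.2.2 ⟨(x : B), nbhd_succ_subset _ _ _ x.2⟩ t ht⟩
  -- inverse limit
  let F : ℕᵒᵖ ⥤ Type _ := Functor.ofOpSequence (X := DT) (fun n => TypeCat.ofHom (res n))
  haveI : ∀ j : ℕᵒᵖ, Finite (F.obj j) := fun j => hFin j.unop
  haveI : ∀ j : ℕᵒᵖ, Nonempty (F.obj j) := fun j => hNE j.unop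
  obtain ⟨s, hs⟩ := nonempty_sections_of_finite_inverse_system F
  -- coherence
  set e : ∀ n : ℕ, DT n := fun n => s (Opposite.op n) with he
  have hstep : ∀ n : ℕ, res n (e (n + 1)) = e n := by
    intro n
    have h2 := @hs (Opposite.op (n + 1)) (Opposite.op n) ((homOfLE (Nat.le_add_right n 1)).op)
    rw [show F.map ((homOfLE (Nat.le_add_right n 1)).op) = TypeCat.ofHom (res n) from
      Functor.ofOpSequence_map_homOfLE_succ _ n] at h2
    exact h2
  have hcoh : ∀ (m n : ℕ) (hmn : m ≤ n) (x : B) (hxm : x ∈ nbhd SB b m)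
      (hxn : x ∈ nbhd SB b n), ((e m).1 ⟨x, hxm⟩ : C) = ((e n).1 ⟨x, hxn⟩ : C) := by
    intro m n hmn
    induction hmn with
    | refl => intro x h1 h2; rfl
    | @step k hk ih =>
      intro x h1 h2
      have h1' : x ∈ nbhd SB b k := nbhd_mono _ _ hk h1
      rw [ih x h1 h1']
      rw [← hstep k]
      rfl
  -- global map
  have memo : ∀ x : ↥(onbhd SB b), ∃ n : ℕ, (x : B) ∈ nbhd SB b n := by
    intro x
    exact Set.mem_iUnion.1 x.2
  let lvl : ↥(onbhd SB b) → ℕ := fun x => Nat.find (memo x)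
  have lvl_spec : ∀ x, (x : B) ∈ nbhd SB b (lvl x) := fun x => Nat.find_spec (memo x)
  let G : ↥(onbhd SB b) → ↥(onbhd SC c) := fun x =>
    ⟨((e (lvl x)).1 ⟨(x : B), lvl_spec x⟩ : C),
      nbhd_subset_onbhd _ _ (lvl x) ((e (lvl x)).1 ⟨(x : B), lvl_spec x⟩).2⟩
  have Gval : ∀ (x : ↥(onbhd SB b)) (n : ℕ) (hn : (x : B) ∈ nbhd SB b n),
      (G x : C) = ((e n).1 ⟨(x : B), hn⟩ : C) := by
    intro x n hn
    have hl : lvl x ≤ n := Nat.find_le hn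
    exact hcoh (lvl x) n hl (x : B) (lvl_spec x) hn
  have hGinj : Function.Injective G := by
    intro x y hxy
    have hval : (G x : C) = (G y : C) := congrArg Subtype.val hxy
    set n := max (lvl x) (lvl y) with hn
    have hxn : (x : B) ∈ nbhd SB b n := nbhd_mono _ _ (le_max_left _ _) (lvl_spec x)
    have hyn : (y : B) ∈ nbhd SB b n := nbhd_mono _ _ (le_max_right _ _) (lvl_spec y)
    rw [Gval x n hxn, Gval y n hyn] at hval
    have h5 := (e n).1.injective (Subtype.ext hval)
    have h6 := congrArg Subtype.val h5
    exact Subtype.ext h6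
  have hGsurj : Function.Surjective G := by
    rintro ⟨y, hy⟩
    obtain ⟨n, hn⟩ := Set.mem_iUnion.1 hy
    set x : ↥(nbhd SB b n) := (e n).1.symm ⟨y, hn⟩ with hx
    refine ⟨⟨(x : B), nbhd_subset_onbhd _ _ n x.2⟩, ?_⟩
    apply Subtype.ext
    rw [Gval ⟨(x : B), nbhd_subset_onbhd _ _ n x.2⟩ n x.2]
    show ((e n).1 ⟨(x : B), x.2⟩ : C) = y
    have : (⟨(x : B), x.2⟩ : ↥(nbhd SB b n)) = x := Subtype.ext rfl
    rw [this, hx, (e n).1.apply_symm_apply]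
  refine ⟨Equiv.ofBijective G ⟨hGinj, hGsurj⟩, ?_, ?_, ?_⟩
  · intro hb hc
    apply Subtype.ext
    show (G ⟨b, hb⟩ : C) = c
    rw [Gval ⟨b, hb⟩ 0 (base_mem_nbhd _ _ _)]
    have := (e 0).2.1 (base_mem_nbhd _ _ _) (base_mem_nbhd _ _ _)
    rw [this]
  · intro x y
    set n := max (lvl x) (lvl y) with hn
    have hxn : (x : B) ∈ nbhd SB b n := nbhd_mono _ _ (le_max_left _ _) (lvl_spec x)
    have hyn : (y : B) ∈ nbhd SB b n := nbhd_mono _ _ (le_max_right _ _) (lvl_spec y)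
    have := (e n).2.2.1 ⟨(x : B), hxn⟩ ⟨(y : B), hyn⟩
    rwa [← Gval x n hxn, ← Gval y n hyn] at this
  · intro x t ht
    have := (e (lvl x)).2.2.2 ⟨(x : B), lvl_spec x⟩ t ht
    rwa [← Gval x (lvl x) (lvl_spec x)] at this
end

section
open Set


variable {A : Type*}

lemma pisoUeA_iff {R : A → A → Prop} {sB : Set (Ultrafilter A)} {sC : Set A}
    {b : Ultrafilter A} {c : A} : PIsoUeA R sB sC b c ↔
    IsPIsoOn (RInf R) (ueRel (SRel R)) (fun x t => ueRel (PRel R) x (pure t))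
      (fun t x => ueRel (PRel R) (pure t) x)
      (SRel R) (fun x t => PRel R x t) (fun t x => PRel R t x) sB sC b c := Iff.rfl

lemma pisoUeUe_iff {R : A → A → Prop} {sB sC : Set (Ultrafilter A)}
    {b c : Ultrafilter A} : PIsoUeUe R sB sC b c ↔
    IsPIsoOn (RInf R) (ueRel (SRel R)) (fun x t => ueRel (PRel R) x (pure t))
      (fun t x => ueRel (PRel R) (pure t) x)
      (ueRel (SRel R)) (fun x t => ueRel (PRel R) x (pure t))
      (fun t x => ueRel (PRel R) (pure t) x) sB sC b c := Iff.rfl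

lemma V_antitone {R : A → A → Prop} (u : Ultrafilter A) (n : ℕ) :
    {w | PIsoUeA R (nbhd (ueRel (SRel R)) u (n+1)) (nbhd (SRel R) w (n+1)) u w} ⊆
    {w | PIsoUeA R (nbhd (ueRel (SRel R)) u n) (nbhd (SRel R) w n) u w} := by
  intro w hw
  simp only [Set.mem_setOf_eq, pisoUeA_iff] at hw ⊢
  exact IsPIsoOn.restrict hw (subset_refl _) (subset_refl _) (Nat.le_succ n)

lemma V_mono_le {R : A → A → Prop} (u : Ultrafilter A) {m n : ℕ} (hmn : m ≤ n) :
    {w | PIsoUeA R (nbhd (ueRel (SRel R)) u n) (nbhd (SRel R) w n) u w} ⊆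
    {w | PIsoUeA R (nbhd (ueRel (SRel R)) u m) (nbhd (SRel R) w m) u w} := by
  induction hmn with
  | refl => exact subset_refl _
  | step _ ih => exact fun w hw => ih (V_antitone u _ hw)

lemma omega_mem_iff {R : A → A → Prop} (h : AlmostBounded R) (u v : Ultrafilter A) :
    PIsoUeUe R (onbhd (ueRel (SRel R)) u) (onbhd (ueRel (SRel R)) v) u v ↔
    ∀ n : ℕ, {w | PIsoUeA R (nbhd (ueRel (SRel R)) u n) (nbhd (SRel R) w n) u w} ∈ v := by
  constructor
  · intro hiso n
    rw [← level_mem_iff h u v n, pisoUeUe_iff]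
    rw [pisoUeUe_iff] at hiso
    exact IsPIsoOn.restrict hiso (nbhd_subset_onbhd _ _ n) (nbhd_subset_onbhd _ _ n) (le_refl n)
  · intro hV
    rw [pisoUeUe_iff]
    refine IsPIsoOn.glue (fun n => nbhd_ue_finite h u n) (fun n => ?_)
    have := (level_mem_iff h u v n).2 (hV n)
    rwa [pisoUeUe_iff] at this
end

section
open Set Cardinal


universe u

lemma exists_inj_chain {A ι : Type u} (target : ι → Set A) (κ : Cardinal.{u})
    (hι : #ι ≤ κ) (hW : ∀ j, κ ≤ #(target j)) :
    ∃ F : ι → A, Function.Injective F ∧ ∀ j, F j ∈ target j := by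
  classical
  rcases isEmpty_or_nonempty ι with hE | hNE
  · exact ⟨fun j => (IsEmpty.elim hE j), fun a => (IsEmpty.elim hE a), fun j => (IsEmpty.elim hE j)⟩
  obtain ⟨j₀⟩ := hNE
  have hA : κ ≤ #A := le_trans (hW j₀) (Cardinal.mk_set_le _)
  have hOt : #(κ.ord.ToType) = κ := Cardinal.mk_ord_toType κ
  obtain ⟨emb⟩ : Nonempty (ι ↪ κ.ord.ToType) := Cardinal.le_def _ _ |>.1 (hι.trans_eq hOt.symm)
  set tgt : κ.ord.ToType → Set A := fun x =>
    if h : ∃ j, emb j = x then target h.choose else Set.univ with htgtdef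
  have htgt : ∀ x, κ ≤ #(tgt x) := by
    intro x
    by_cases h : ∃ j, emb j = x
    · rw [htgtdef]; simp only [dif_pos h]; exact hW _
    · rw [htgtdef]; simp only [dif_neg h]; rwa [Cardinal.mk_univ]
  have hIio : ∀ x : κ.ord.ToType, #{y : κ.ord.ToType // y < x} < κ := by
    intro x
    have h1 := Cardinal.card_typein_toType_lt κ x
    haveI : IsWellOrder κ.ord.ToType (· < ·) := isWellOrder_lt
    have h2 : #{y : κ.ord.ToType // y < x} =
        ((Ordinal.typein (fun x1 x2 : κ.ord.ToType => x1 < x2)).toRelEmbedding x).card :=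
      Ordinal.card_typein x
    rw [h2]
    exact h1
  have wf : WellFounded ((· < ·) : κ.ord.ToType → κ.ord.ToType → Prop) := IsWellFounded.wf
  have hne : ∀ (x : κ.ord.ToType) (ih : ∀ y, y < x → A),
      (tgt x \ {a | ∃ y, ∃ h : y < x, ih y h = a}).Nonempty := by
    intro x ih
    rw [Set.nonempty_iff_ne_empty]
    intro hemp
    have hsub : tgt x ⊆ {a | ∃ y, ∃ h : y < x, ih y h = a} := by
      intro a ha
      by_contra hc
      exact (Set.eq_empty_iff_forall_notMem.1 hemp a) ⟨ha, hc⟩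
    have h2 : #(tgt x) ≤ #{a | ∃ y, ∃ h : y < x, ih y h = a} := Cardinal.mk_le_mk_of_subset hsub
    have h3 : {a | ∃ y, ∃ h : y < x, ih y h = a} =
        Set.range (fun y : {y // y < x} => ih y.1 y.2) := by
      ext a
      constructor
      · rintro ⟨y, hy, rfl⟩; exact ⟨⟨y, hy⟩, rfl⟩
      · rintro ⟨⟨y, hy⟩, rfl⟩; exact ⟨y, hy, rfl⟩
    rw [h3] at h2
    have h4 : #(Set.range (fun y : {y // y < x} => ih y.1 y.2)) ≤ #{y // y < x} :=
      Cardinal.mk_range_le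
    exact absurd (lt_of_le_of_lt (le_trans (htgt x) (le_trans h2 h4)) (hIio x)) (lt_irrefl κ)
  set f : κ.ord.ToType → A := WellFounded.fix wf
    (fun x ih => (hne x ih).some) with hfdef
  have hfix : ∀ x, f x = (hne x (fun y _ => f y)).some := by
    intro x
    rw [hfdef, WellFounded.fix_eq]
  have hfmem : ∀ x, f x ∈ tgt x ∧ f x ∉ {a | ∃ y, ∃ _ : y < x, f y = a} := by
    intro x
    rw [hfix x]
    exact (hne x (fun y _ => f y)).some_mem
  have hfinj : Function.Injective f := by
    intro x y hxy
    rcases lt_trichotomy x y with hlt | heq | hlt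
    · exact absurd ⟨x, hlt, hxy⟩ (hfmem y).2
    · exact heq
    · exact absurd ⟨y, hlt, hxy.symm⟩ (hfmem x).2
  refine ⟨fun j => f (emb j), fun j j' hjj => emb.injective (hfinj hjj), fun j => ?_⟩
  have h : ∃ j', emb j' = emb j := ⟨j, rfl⟩
  have hch : h.choose = j := emb.injective h.choose_spec
  have := (hfmem (emb j)).1
  rw [htgtdef] at this
  simp only [dif_pos h] at this
  rwa [hch] at this
end

section
open Set Cardinal


universe u

lemma mk_hausdorff_carrier (T : Type u) [Infinite T] :
    #(Finset T × Finset (Finset T)) = #T := by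
  rw [Cardinal.mk_prod, Cardinal.lift_id, Cardinal.lift_id,
    Cardinal.mk_finset_of_infinite, Cardinal.mk_finset_of_infinite,
    Cardinal.mk_finset_of_infinite, Cardinal.mul_eq_self (Cardinal.aleph0_le_mk T)]

/-- A Hausdorff independent family on `Finset T × Finset (Finset T)`, indexed by `Set T`. -/
lemma exists_indep_family (T : Type u) [Infinite T] :
    ∃ I : Set T → Set (Finset T × Finset (Finset T)),
      ∀ F G : Finset (Set T), (∀ X ∈ F, ∀ Y ∈ G, X ≠ Y) →
        ∃ p : Finset T × Finset (Finset T),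
          (∀ X ∈ F, p ∈ I X) ∧ (∀ Y ∈ G, p ∉ I Y) := by
  classical
  refine ⟨fun X => {p | p.1.filter (· ∈ X) ∈ p.2}, fun F G hFG => ?_⟩
  set d : Set T → Set T → T := fun X Y =>
    if h : ((X \ Y) ∪ (Y \ X)).Nonempty then h.some else Classical.arbitrary T with hd
  set D : Finset T := Finset.image (fun p => d p.1 p.2) (F ×ˢ G) with hD
  refine ⟨(D, F.image (fun X => D.filter (· ∈ X))), ?_, ?_⟩
  · intro X hX
    exact Finset.mem_image_of_mem (fun X => D.filter (· ∈ X)) hX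
  · intro Y hY hmem
    simp only [Set.mem_setOf_eq, Finset.mem_image] at hmem
    obtain ⟨X, hX, hXY⟩ := hmem
    have hne : X ≠ Y := hFG X hX Y hY
    have hsd : ((X \ Y) ∪ (Y \ X)).Nonempty := by
      rw [Set.nonempty_iff_ne_empty]
      intro hemp
      apply hne
      ext a
      constructor
      · intro ha
        by_contra hna
        exact (Set.eq_empty_iff_forall_notMem.1 hemp a) (Or.inl ⟨ha, hna⟩)
      · intro ha
        by_contra hna
        exact (Set.eq_empty_iff_forall_notMem.1 hemp a) (Or.inr ⟨ha, hna⟩)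
    have haD : d X Y ∈ D := by
      rw [hD]
      exact Finset.mem_image.2 ⟨(X, Y), Finset.mem_product.2 ⟨hX, hY⟩, rfl⟩
    have hasd : d X Y ∈ (X \ Y) ∪ (Y \ X) := by
      rw [hd]
      simp only [dif_pos hsd]
      exact hsd.some_mem
    have hiff : (d X Y ∈ X) ↔ (d X Y ∈ Y) := by
      constructor
      · intro hh
        have h1 : d X Y ∈ D.filter (· ∈ X) := Finset.mem_filter.2 ⟨haD, hh⟩
        rw [hXY] at h1
        exact (Finset.mem_filter.1 h1).2
      · intro hh
        have h1 : d X Y ∈ D.filter (· ∈ Y) := Finset.mem_filter.2 ⟨haD, hh⟩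
        rw [← hXY] at h1
        exact (Finset.mem_filter.1 h1).2
    rcases hasd with ⟨h1, h2⟩ | ⟨h1, h2⟩
    · exact h2 (hiff.1 h1)
    · exact h2 (hiff.2 h1)
end

section
open Set Cardinal


universe u

lemma lower_bound {A : Type u} (Vc : ℕ → Set A) (hdec : ∀ {m n : ℕ}, m ≤ n → Vc n ⊆ Vc m)
    (κ : Cardinal.{u}) (hκℵ : ℵ₀ ≤ κ) (hκ : ∀ n, κ ≤ #(Vc n)) :
    (2 : Cardinal) ^ ((2 : Cardinal) ^ κ) ≤ #{v : Ultrafilter A | ∀ n, Vc n ∈ v} := by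
  classical
  set T := κ.ord.ToType with hTdef
  have hT : #T = κ := mk_ord_toType κ
  haveI : Infinite T := infinite_iff.2 (by rw [hT]; exact hκℵ)
  obtain ⟨I, hI⟩ := exists_indep_family T
  have hβ : #(Finset T × Finset (Finset T)) = κ := by rw [mk_hausdorff_carrier T, hT]
  have hβℕ : #((Finset T × Finset (Finset T)) × ℕ) ≤ κ := by
    rw [Cardinal.mk_prod, Cardinal.lift_id', Cardinal.mk_nat, Cardinal.lift_aleph0, hβ,
      Cardinal.mul_aleph0_eq hκℵ]
  obtain ⟨F, hFinj, hFmem⟩ := exists_inj_chain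
    (fun p : (Finset T × Finset (Finset T)) × ℕ => Vc p.2) κ hβℕ (fun p => hκ p.2)
  set B : Set T → Set A := fun X => F '' {p | p.1 ∈ I X} with hB
  set gen : Set (Set T) → Set (Set A) := fun G =>
    (Set.range Vc ∪ (fun X => B X) '' G) ∪ (fun X => (B X)ᶜ) '' Gᶜ with hgen
  have hFIP : ∀ G, ∀ t ⊆ gen G, t.Finite → (⋂₀ t).Nonempty := by
    intro G t hsub htfin
    set tf := htfin.toFinset with htf
    set nsel : Set A → ℕ := fun s => if h : ∃ n, s = Vc n then h.choose else 0 with hnsel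
    set X2 : Set A → Set T := fun s => if h : ∃ X, X ∈ G ∧ s = B X then h.choose else ∅ with hX2
    set X3 : Set A → Set T := fun s => if h : ∃ X, X ∉ G ∧ s = (B X)ᶜ then h.choose else ∅
      with hX3
    set N : ℕ := tf.sup nsel with hN
    set Fs : Finset (Set T) := (tf.filter (fun s => ∃ X, X ∈ G ∧ s = B X)).image X2 with hFs
    set Gs : Finset (Set T) := (tf.filter (fun s => ∃ X, X ∉ G ∧ s = (B X)ᶜ)).image X3 with hGs
    have hFsG : ∀ X ∈ Fs, X ∈ G := by
      intro X hX
      rw [hFs] at hX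
      obtain ⟨s, hs, rfl⟩ := Finset.mem_image.1 hX
      have h := (Finset.mem_filter.1 hs).2
      rw [hX2]
      simp only [dif_pos h]
      exact h.choose_spec.1
    have hGsG : ∀ Y ∈ Gs, Y ∉ G := by
      intro Y hY
      rw [hGs] at hY
      obtain ⟨s, hs, rfl⟩ := Finset.mem_image.1 hY
      have h := (Finset.mem_filter.1 hs).2
      rw [hX3]
      simp only [dif_pos h]
      exact h.choose_spec.1
    obtain ⟨p, hp1, hp2⟩ := hI Fs Gs (fun X hX Y hY hXY =>
      (hGsG Y hY) (hXY ▸ hFsG X hX))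
    refine ⟨F (p, N), ?_⟩
    rw [Set.mem_sInter]
    intro s hs
    have hstf : s ∈ tf := (Set.Finite.mem_toFinset htfin).2 hs
    rcases hsub hs with (⟨n, hn⟩ | h2) | h3
    · -- s = Vc n
      have hsel : ∃ n, s = Vc n := ⟨n, hn.symm⟩
      have hspec : s = Vc (nsel s) := by
        rw [hnsel]; simp only [dif_pos hsel]; exact hsel.choose_spec
      have hle : nsel s ≤ N := Finset.le_sup hstf
      rw [hspec]
      exact hdec hle (hFmem (p, N))
    · -- s = B X, X ∈ G
      obtain ⟨X, hXG, hXs⟩ := h2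
      have hsel : ∃ X, X ∈ G ∧ s = B X := ⟨X, hXG, hXs.symm⟩
      have hX2s : X2 s ∈ Fs := by
        rw [hFs]
        exact Finset.mem_image_of_mem _ (Finset.mem_filter.2 ⟨hstf, hsel⟩)
      have hspec : X2 s ∈ G ∧ s = B (X2 s) := by
        rw [hX2]; simp only [dif_pos hsel]; exact hsel.choose_spec
      rw [hspec.2, hB]
      exact ⟨(p, N), hp1 _ hX2s, rfl⟩
    · -- s = (B X)ᶜ, X ∉ G
      obtain ⟨X, hXG, hXs⟩ := h3
      have hsel : ∃ X, X ∉ G ∧ s = (B X)ᶜ := ⟨X, hXG, hXs.symm⟩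
      have hX3s : X3 s ∈ Gs := by
        rw [hGs]
        exact Finset.mem_image_of_mem _ (Finset.mem_filter.2 ⟨hstf, hsel⟩)
      have hspec : X3 s ∉ G ∧ s = (B (X3 s))ᶜ := by
        rw [hX3]; simp only [dif_pos hsel]; exact hsel.choose_spec
      rw [hspec.2]
      intro hmem
      rw [hB] at hmem
      obtain ⟨q, hq, hqeq⟩ := hmem
      have : q = (p, N) := hFinj hqeq
      rw [this] at hq
      exact (hp2 _ hX3s) hq
  have hNB : ∀ G : Set (Set T), (Filter.generate (gen G)).NeBot := fun G =>
    Filter.generate_neBot_iff.2 (hFIP G)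
  have hUex : ∀ G : Set (Set T), ∃ uu : Ultrafilter A, (uu : Filter A) ≤ Filter.generate (gen G) := by
    intro G
    haveI := hNB G
    exact Filter.exists_ultrafilter_le _
  choose U hUle using hUex
  have hUmem : ∀ G s, s ∈ gen G → s ∈ U G := fun G s hs =>
    hUle G (Filter.mem_generate_of_mem hs)
  have hUV : ∀ G n, Vc n ∈ U G := fun G n =>
    hUmem G (Vc n) (Or.inl (Or.inl ⟨n, rfl⟩))
  have hUB : ∀ G X, X ∈ G → B X ∈ U G := fun G X hX =>
    hUmem G (B X) (Or.inl (Or.inr ⟨X, hX, rfl⟩))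
  have hUBc : ∀ G X, X ∉ G → (B X)ᶜ ∈ U G := fun G X hX =>
    hUmem G ((B X)ᶜ) (Or.inr ⟨X, hX, rfl⟩)
  have hUinj : Function.Injective U := by
    intro G G' heq
    by_contra hne
    have : ∃ X, (X ∈ G ∧ X ∉ G') ∨ (X ∈ G' ∧ X ∉ G) := by
      by_contra hc
      push_neg at hc
      exact hne (Set.ext fun X => ⟨(hc X).1, (hc X).2⟩)
    obtain ⟨X, hX | hX⟩ := this
    · have h1 : B X ∈ U G := hUB G X hX.1
      have h2 : (B X)ᶜ ∈ U G := heq ▸ hUBc G' X hX.2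
      exact (Ultrafilter.compl_mem_iff_notMem.1 h2) h1
    · have h1 : B X ∈ U G' := hUB G' X hX.1
      have h2 : (B X)ᶜ ∈ U G' := heq ▸ hUBc G X hX.2
      exact (Ultrafilter.compl_mem_iff_notMem.1 h2) h1
  have hcard : (2 : Cardinal) ^ ((2 : Cardinal) ^ κ) = #(Set (Set T)) := by
    rw [mk_set, mk_set, hT]
  rw [hcard]
  have hinj2 : Function.Injective (fun G : Set (Set T) =>
      (⟨U G, fun n => hUV G n⟩ : {v : Ultrafilter A | ∀ n, Vc n ∈ v})) := by
    intro G G' h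
    exact hUinj (congrArg Subtype.val h)
  exact Cardinal.mk_le_of_injective hinj2
end

/-- If all the sets `V_n = {w : ⟨u⟩ⁿ_{S^ue} ≅_P ⟨w⟩ⁿ_S}` are infinite, then the
number of ultrafilters `v` with `⟨u⟩^ω_{S^ue} ≅_P ⟨v⟩^ω_{S^ue}` is exactly
`2^(2^(λ_m))`, where `λ_m = min_n |V_n|`. -/
theorem count_omega_nbhd {A : Type*} (R : A → A → Prop) (h : AlmostBounded R)
    (u : Ultrafilter A)
    (hinf : ∀ n : ℕ, (ℵ₀ : Cardinal) ≤
      #{w : A | PIsoUeA R (nbhd (ueRel (SRel R)) u n) (nbhd (SRel R) w n) u w}) :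
    #{v : Ultrafilter A |
        PIsoUeUe R (onbhd (ueRel (SRel R)) u) (onbhd (ueRel (SRel R)) v) u v} =
      (2 : Cardinal) ^ ((2 : Cardinal) ^ (⨅ n : ℕ,
        #{w : A | PIsoUeA R (nbhd (ueRel (SRel R)) u n) (nbhd (SRel R) w n) u w})) := by
  classical
  set Vc : ℕ → Set A :=
    fun n => {w | PIsoUeA R (nbhd (ueRel (SRel R)) u n) (nbhd (SRel R) w n) u w} with hVc
  set κ : Cardinal := ⨅ n : ℕ, #(Vc n) with hκ
  have hκℵ : ℵ₀ ≤ κ := le_ciInf hinf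
  have hdec : ∀ {m n : ℕ}, m ≤ n → Vc n ⊆ Vc m := fun hmn => V_mono_le u hmn
  have hκle : ∀ n, κ ≤ #(Vc n) := fun n => ciInf_le (OrderBot.bddBelow _) n
  obtain ⟨M, hM⟩ : ∃ M, #(Vc M) = κ := by
    have h1 : (⨅ n : ℕ, #(Vc n)) ∈ Set.range (fun n => #(Vc n)) :=
      csInf_mem (Set.range_nonempty _)
    obtain ⟨M, hM⟩ := h1
    exact ⟨M, by rw [← hκ] at hM; exact hM⟩
  have hset : {v : Ultrafilter A |
      PIsoUeUe R (onbhd (ueRel (SRel R)) u) (onbhd (ueRel (SRel R)) v) u v}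
      = {v : Ultrafilter A | ∀ n, Vc n ∈ v} := Set.ext fun v => omega_mem_iff h u v
  rw [hset]
  refine le_antisymm ?_ ?_
  · have key : ∀ (w w' : ↥{v : Ultrafilter A | ∀ n, Vc n ∈ v}),
        {Z : Set ↥(Vc M) | Subtype.val '' Z ∈ (w : Ultrafilter A)} =
          {Z : Set ↥(Vc M) | Subtype.val '' Z ∈ (w' : Ultrafilter A)} →
        ∀ X : Set A, X ∈ (w : Ultrafilter A) → X ∈ (w' : Ultrafilter A) := by
      intro w w' hww X hX
      have h1 : Subtype.val '' (Subtype.val ⁻¹' X : Set ↥(Vc M)) ∈ (w : Ultrafilter A) := by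
        rw [Subtype.image_preimage_coe]
        exact (w : Ultrafilter A).inter_mem (w.2 M) hX
      have h2 : (Subtype.val ⁻¹' X : Set ↥(Vc M)) ∈
          {Z : Set ↥(Vc M) | Subtype.val '' Z ∈ (w : Ultrafilter A)} := h1
      rw [hww] at h2
      have h3 : Subtype.val '' (Subtype.val ⁻¹' X : Set ↥(Vc M)) ∈ (w' : Ultrafilter A) := h2
      rw [Subtype.image_preimage_coe] at h3
      exact Filter.mem_of_superset h3 Set.inter_subset_right
    have hup : #↥{v : Ultrafilter A | ∀ n, Vc n ∈ v} ≤ #(Set (Set ↥(Vc M))) := by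
      refine Cardinal.mk_le_of_injective (f := fun v : ↥{v : Ultrafilter A | ∀ n, Vc n ∈ v} =>
        {Z : Set ↥(Vc M) | Subtype.val '' Z ∈ (v : Ultrafilter A)}) ?_
      intro v v' heq
      apply Subtype.ext
      apply Ultrafilter.coe_injective
      apply Filter.ext
      intro X
      exact ⟨key v v' heq X, key v' v heq.symm X⟩
    refine le_trans hup ?_
    rw [mk_set, mk_set, hM]
  · exact lower_bound Vc hdec κ hκℵ hκle


end UEx
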